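/- Suppose α, β ∈ ℝ and u : ℝ_x × ℝ_t → ℝ is four times continuously differentiable and solves the WKI–SP equation u_{xt} + α (u_x/√(1+u_x²))_{xxx} = β (u + (1/6)(u³)_{xx}) on ℝ². Then, writing m = 1 + u_x², the conservation-law identity ∂_t(√m) = ∂_x [ (1/2) β u² √m + α ( (1/2) ((u_x/√m)_x)² − (u_x/√m) (u_x/√m)_{xx} ) ] holds at every point of ℝ². -/

import Mathlib

/-- Partial derivative in the first (space) variable. -/
noncomputable def pdx (f : ℝ × ℝ → ℝ) : ℝ × ℝ → ℝ :=
  fun p => deriv (fun x => f (x, p.2)) p.1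

/-- Partial derivative in the second (time) variable. -/
noncomputable def pdt (f : ℝ × ℝ → ℝ) : ℝ × ℝ → ℝ :=
  fun p => deriv (fun t => f (p.1, t)) p.2

/-- If `u` is `C⁴` and solves the WKI–SP equation
`u_{xt} + α (u_x/√(1+u_x²))_{xxx} = β (u + (1/6)(u³)_{xx})` on `ℝ²`, then, with
`m = 1 + u_x²`, the conservation-law identity
`∂_t(√m) = ∂_x [ (1/2) β u² √m + α ((1/2)((u_x/√m)_x)² − (u_x/√m)(u_x/√m)_{xx}) ]`
holds at every point. -/
theorem stmt0 (α β : ℝ) (u : ℝ × ℝ → ℝ) (hu : ContDiff ℝ 4 u)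
    (heq : ∀ p : ℝ × ℝ,
      pdt (pdx u) p
        + α * pdx (pdx (pdx (fun q => pdx u q / Real.sqrt (1 + (pdx u q) ^ 2)))) p
        = β * (u p + (1 / 6) * pdx (pdx (fun q => (u q) ^ 3)) p)) :
    ∀ p : ℝ × ℝ,
      pdt (fun q => Real.sqrt (1 + (pdx u q) ^ 2)) p
        = pdx (fun q =>
            (1 / 2) * β * (u q) ^ 2 * Real.sqrt (1 + (pdx u q) ^ 2)
              + α * ((1 / 2) * (pdx (fun r => pdx u r / Real.sqrt (1 + (pdx u r) ^ 2)) q) ^ 2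
                - (pdx u q / Real.sqrt (1 + (pdx u q) ^ 2))
                    * pdx (pdx (fun r => pdx u r / Real.sqrt (1 + (pdx u r) ^ 2))) q)) p := by
  rintro ⟨x₀, t₀⟩
  -- the space slice
  set f : ℝ → ℝ := fun x => u (x, t₀) with hfdef
  have hf : ContDiff ℝ 4 f := hu.comp (contDiff_id.prodMk contDiff_const)
  have hf' : ContDiff ℝ 3 (deriv f) := by
    have h4 : ContDiff ℝ (3+1 : ℕ) f := by exact_mod_cast hf
    exact ((contDiff_succ_iff_deriv).mp h4).2.2
  -- s = sqrt(1 + f'^2)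
  set s : ℝ → ℝ := fun x => Real.sqrt (1 + (deriv f x) ^ 2) with hsdef
  have hpos : ∀ x, (0:ℝ) < 1 + (deriv f x) ^ 2 := fun x => by positivity
  have hspos : ∀ x, 0 < s x := fun x => Real.sqrt_pos.mpr (hpos x)
  have hsne : ∀ x, s x ≠ 0 := fun x => (hspos x).ne'
  have hssq : ∀ x, s x ^ 2 = 1 + (deriv f x) ^ 2 := fun x => Real.sq_sqrt (hpos x).le
  have hs : ContDiff ℝ 3 s := by
    rw [contDiff_iff_contDiffAt]
    intro x
    exact (Real.contDiffAt_sqrt (hpos x).ne').comp x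
      ((contDiff_const.add (hf'.pow 2)).contDiffAt)
  set W : ℝ → ℝ := fun x => deriv f x / s x with hWdef
  have hW : ContDiff ℝ 3 W := hf'.div hs hsne
  have hW1 : ContDiff ℝ 2 (deriv W) := by
    have h3 : ContDiff ℝ (2+1 : ℕ) W := by exact_mod_cast hW
    exact ((contDiff_succ_iff_deriv).mp h3).2.2
  have hW2 : ContDiff ℝ 1 (deriv (deriv W)) := by
    have h2 : ContDiff ℝ (1+1 : ℕ) (deriv W) := by exact_mod_cast hW1
    exact ((contDiff_succ_iff_deriv).mp h2).2.2
  -- basic HasDerivAt facts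
  have hDf : ∀ x, HasDerivAt f (deriv f x) x :=
    fun x => (hf.differentiable (by norm_num) x).hasDerivAt
  have hDd1 : ∀ x, HasDerivAt (deriv f) (deriv (deriv f) x) x :=
    fun x => (hf'.differentiable (by norm_num) x).hasDerivAt
  have hDs : ∀ x, HasDerivAt s (deriv f x * deriv (deriv f) x / s x) x := by
    intro x
    have h1 := (((hDd1 x).pow 2).const_add 1).sqrt (hpos x).ne'
    convert h1 using 1
    · rfl
    · rw [show s x = √(1 + deriv f x ^ 2) from rfl]
      simp only [Pi.pow_apply]
      norm_num
      field_simp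
  have hDW : ∀ x, HasDerivAt W (deriv W x) x :=
    fun x => (hW.differentiable (by norm_num) x).hasDerivAt
  have hDW1 : ∀ x, HasDerivAt (deriv W) (deriv (deriv W) x) x :=
    fun x => (hW1.differentiable (by norm_num) x).hasDerivAt
  have hDW2 : HasDerivAt (deriv (deriv W)) (deriv (deriv (deriv W)) x₀) x₀ :=
    (hW2.differentiable one_ne_zero x₀).hasDerivAt
  -- second derivative of f^3
  have hcube : deriv (fun y => f y ^ 3) = fun x => 3 * f x ^ 2 * deriv f x := by
    funext x
    have := ((hDf x).pow 3).deriv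
    simp at this
    exact this
  have hD2 : deriv (deriv (fun y => f y ^ 3)) x₀
      = 6 * f x₀ * (deriv f x₀) ^ 2 + 3 * (f x₀) ^ 2 * deriv (deriv f) x₀ := by
    rw [hcube]
    have h1 : HasDerivAt (fun x => 3 * f x ^ 2 * deriv f x)
        ((3 * (2 * f x₀ ^ 1 * deriv f x₀)) * deriv f x₀ + (3 * f x₀ ^ 2) * deriv (deriv f) x₀) x₀ :=
      (((hDf x₀).pow 2).const_mul 3).mul (hDd1 x₀)
    rw [h1.deriv]; ring
  -- the time slice of u_x
  have hpdxu : pdx u = fun q => fderiv ℝ u q ((1:ℝ), (0:ℝ)) := by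
    funext q
    obtain ⟨x, t⟩ := q
    have h1 : HasDerivAt (fun y => u (y, t)) (fderiv ℝ u (x, t) ((1:ℝ), (0:ℝ))) x :=
      (hu.differentiable (by norm_num) (x, t)).hasFDerivAt.comp_hasDerivAt x
        ((hasDerivAt_id x).prodMk (hasDerivAt_const x t))
    exact h1.deriv
  have hcx : ContDiff ℝ 3 (pdx u) := by
    rw [hpdxu]
    exact (hu.fderiv_right (by norm_num)).clm_apply contDiff_const
  set h : ℝ → ℝ := fun t => pdx u (x₀, t) with hhdef
  have hhc : Differentiable ℝ h :=
    (hcx.differentiable (by norm_num)).comp ((differentiable_const x₀).prodMk differentiable_id)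
  have hDh : HasDerivAt h (deriv h t₀) t₀ := (hhc t₀).hasDerivAt
  have hh0 : h t₀ = deriv f x₀ := rfl
  -- left-hand side
  have hLHS : HasDerivAt (fun t => Real.sqrt (1 + h t ^ 2))
      ((2 * h t₀ ^ 1 * deriv h t₀) / (2 * Real.sqrt (1 + h t₀ ^ 2))) t₀ := by
    have hp : (1 : ℝ) + h t₀ ^ 2 ≠ 0 := by positivity
    exact ((hDh.pow 2).const_add 1).sqrt hp
  -- the PDE at (x₀,t₀), in slice form
  have E : deriv h t₀ + α * deriv (deriv (deriv W)) x₀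
      = β * (f x₀ + (1 / 6) * deriv (deriv (fun x => f x ^ 3)) x₀) := heq (x₀, t₀)
  -- the flux derivative
  have hRHS : HasDerivAt (fun x =>
      (1 / 2) * β * f x ^ 2 * s x
        + α * ((1 / 2) * (deriv W x) ^ 2 - W x * deriv (deriv W) x))
      (((1 / 2 * β) * (2 * f x₀ ^ 1 * deriv f x₀) * s x₀
          + (1 / 2 * β * f x₀ ^ 2) * (deriv f x₀ * deriv (deriv f) x₀ / s x₀))
        + α * ((1 / 2) * (2 * deriv W x₀ ^ 1 * deriv (deriv W) x₀)
          - (deriv W x₀ * deriv (deriv W) x₀ + W x₀ * deriv (deriv (deriv W)) x₀))) x₀ := by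
    have h1 : HasDerivAt (fun x => (1 / 2) * β * f x ^ 2 * s x)
        ((1 / 2 * β) * (2 * f x₀ ^ 1 * deriv f x₀) * s x₀
          + (1 / 2 * β * f x₀ ^ 2) * (deriv f x₀ * deriv (deriv f) x₀ / s x₀)) x₀ := by
      have := ((((hDf x₀).pow 2).const_mul (1 / 2 * β)).mul (hDs x₀))
      refine this.congr_deriv ?_
      norm_num [Pi.pow_apply]
    have h2 : HasDerivAt (fun x => (1 / 2) * (deriv W x) ^ 2 - W x * deriv (deriv W) x)
        ((1 / 2) * (2 * deriv W x₀ ^ 1 * deriv (deriv W) x₀)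
          - (deriv W x₀ * deriv (deriv W) x₀ + W x₀ * deriv (deriv (deriv W)) x₀)) x₀ := by
      exact (((hDW1 x₀).pow 2).const_mul (1 / 2)).sub ((hDW x₀).mul hDW2)
    exact h1.add (h2.const_mul α)
  -- reduce the goal to the slice computation
  show deriv (fun t => Real.sqrt (1 + h t ^ 2)) t₀
    = deriv (fun x =>
        (1 / 2) * β * f x ^ 2 * s x
          + α * ((1 / 2) * (deriv W x) ^ 2 - W x * deriv (deriv W) x)) x₀
  rw [hLHS.deriv, hRHS.deriv]
  rw [hh0]
  have hW0 : W x₀ = deriv f x₀ / s x₀ := rfl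
  have hEd : deriv h t₀
      = β * (f x₀ + (1 / 6) * deriv (deriv (fun x => f x ^ 3)) x₀)
        - α * deriv (deriv (deriv W)) x₀ := by linarith
  rw [hEd, hD2, hW0]
  have hs0 : s x₀ = Real.sqrt (1 + deriv f x₀ ^ 2) := rfl
  rw [← hs0]
  have hq := hssq x₀
  have hn := hsne x₀
  field_simp
  linear_combination (-(12:ℝ) * β * f x₀ * deriv f x₀) * hq
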